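/- Let φ : ℝ → ℝ be C² and monotonically increasing with |φ''(s)| ≤ M·φ'(s)^{1/r} for all s ∈ ℝ, where r > 1 and M ≥ 0. Then for all s ∈ ℝ, φ'(s)^{(r-1)/r} ≤ φ'(0)^{(r-1)/r} + M·((r-1)/r)·|s|. -/

import Mathlib

/-!
For `ε > 0` the function `(φ' + ε)^α`, `α = (r - 1) / r`, is differentiable with derivative
`α φ'' (φ' + ε)^(α - 1)`, and since `(φ' + ε)^(α - 1) = (φ' + ε)^(-1/r)` the growth condition bounds
it by `M α`. The mean value theorem makes `(φ' + ε)^α` therefore `M α`-Lipschitz, and letting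
`ε → 0⁺` gives the claim; the shift by `ε` avoids the points where `φ'` vanishes, at which `φ'^α`
need not be differentiable.
-/

open Filter Topology

section

variable {f f' : ℝ → ℝ} {α M : ℝ}

lemma abs_mul_mul_rpow_sub_one_le {d x ε : ℝ} (hα : 0 < α) (hα1 : α ≤ 1) (hM : 0 ≤ M)
    (hx : 0 ≤ x) (hε : 0 < ε) (hd : |d| ≤ M * x ^ (1 - α)) :
    |d * α * (x + ε) ^ (α - 1)| ≤ M * α := by
  have hxε : 0 < x + ε := by linarith
  have hpow_pos : 0 < (x + ε) ^ (α - 1) := Real.rpow_pos_of_pos hxε _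
  have hpow_inv : (x + ε) ^ (α - 1) * (x + ε) ^ (1 - α) = 1 := by
    rw [← Real.rpow_add hxε, sub_add_sub_cancel', sub_self, Real.rpow_zero]
  have hd' : |d| ≤ M * (x + ε) ^ (1 - α) :=
    hd.trans (mul_le_mul_of_nonneg_left
      (Real.rpow_le_rpow hx (by linarith) (by linarith)) hM)
  calc |d * α * (x + ε) ^ (α - 1)| = |d| * α * (x + ε) ^ (α - 1) := by
        rw [abs_mul, abs_mul, abs_of_pos hα, abs_of_pos hpow_pos]
    _ ≤ M * (x + ε) ^ (1 - α) * α * (x + ε) ^ (α - 1) := by gcongr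
    _ = M * α * ((x + ε) ^ (α - 1) * (x + ε) ^ (1 - α)) := by ring
    _ = M * α := by rw [hpow_inv, mul_one]

lemma add_rpow_le_of_abs_deriv_le (hα : 0 < α) (hα1 : α ≤ 1) (hM : 0 ≤ M)
    (hf : ∀ t, HasDerivAt f (f' t) t) (hf0 : ∀ t, 0 ≤ f t)
    (hbound : ∀ t, |f' t| ≤ M * f t ^ (1 - α)) {ε : ℝ} (hε : 0 < ε)
    (a b : ℝ) :
    (f b + ε) ^ α ≤ (f a + ε) ^ α + M * α * |b - a| := by
  have hderiv : ∀ t, HasDerivAt (fun t ↦ (f t + ε) ^ α)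
      (f' t * α * (f t + ε) ^ (α - 1)) t := fun t ↦
    ((hf t).add_const ε).rpow_const (Or.inl (by linarith [hf0 t]))
  have hlip := convex_univ.norm_image_sub_le_of_norm_hasDerivWithin_le
    (fun t _ ↦ (hderiv t).hasDerivWithinAt)
    (fun t _ ↦ abs_mul_mul_rpow_sub_one_le hα hα1 hM (hf0 t) hε (hbound t))
    (Set.mem_univ a) (Set.mem_univ b)
  rw [Real.norm_eq_abs, Real.norm_eq_abs] at hlip
  linarith [le_abs_self ((f b + ε) ^ α - (f a + ε) ^ α)]

lemma rpow_le_rpow_add_of_abs_deriv_le (hα : 0 < α) (hα1 : α ≤ 1) (hM : 0 ≤ M)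
    (hf : ∀ t, HasDerivAt f (f' t) t) (hf0 : ∀ t, 0 ≤ f t)
    (hbound : ∀ t, |f' t| ≤ M * f t ^ (1 - α)) (a b : ℝ) :
    f b ^ α ≤ f a ^ α + M * α * |b - a| := by
  have hlim : Tendsto (fun ε ↦ (f a + ε) ^ α + M * α * |b - a|) (𝓝[>] 0)
      (𝓝 (f a ^ α + M * α * |b - a|)) := by
    have hcont : Continuous (fun ε ↦ (f a + ε) ^ α + M * α * |b - a|) :=
      ((continuous_const.add continuous_id).rpow_const fun _ ↦ Or.inr hα.le).add
        continuous_const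
    simpa using hcont.tendsto' 0 _ (by simp) |>.mono_left nhdsWithin_le_nhds
  refine ge_of_tendsto hlim ?_
  filter_upwards [self_mem_nhdsWithin] with ε (hε : 0 < ε)
  calc f b ^ α ≤ (f b + ε) ^ α := Real.rpow_le_rpow (hf0 b) (by linarith) hα.le
    _ ≤ (f a + ε) ^ α + M * α * |b - a| :=
      add_rpow_le_of_abs_deriv_le hα hα1 hM hf hf0 hbound hε a b

end

/-- At most linear growth of (φ')^{(r-1)/r} under the growth condition (2.1). -/
theorem stmt_2
    (φ : ℝ → ℝ) (hφ : ContDiff ℝ 2 φ) (hmono : Monotone φ)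
    (r M : ℝ) (hr : 1 < r) (hM : 0 ≤ M)
    (hgrowth : ∀ s : ℝ, |deriv (deriv φ) s| ≤ M * (deriv φ s) ^ (1 / r)) :
    ∀ s : ℝ,
      (deriv φ s) ^ ((r - 1) / r) ≤ (deriv φ 0) ^ ((r - 1) / r) + M * ((r - 1) / r) * |s| := by
  intro s
  have hr0 : 0 < r := by linarith
  have hα : 0 < (r - 1) / r := div_pos (by linarith) hr0
  have hα1 : (r - 1) / r ≤ 1 := (div_le_one hr0).mpr (by linarith)
  have hexp : 1 / r = 1 - (r - 1) / r := by field_simp; ring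
  simpa using rpow_le_rpow_add_of_abs_deriv_le hα hα1 hM
    (fun t ↦ (hφ.differentiable_deriv_two t).hasDerivAt) (fun _ ↦ hmono.deriv_nonneg)
    (hexp ▸ hgrowth) 0 s
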